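/- Let E ∈ M_n(ℝ) be tropically idempotent of full rank n and A an element of the H-class of E. Then the map x ↦ A ⊗ x sends every point of ℝ^n not in C(E) to the boundary of C(E), maps interior points of C(E) to interior points, and maps boundary points of C(E) to boundary points (where C(E) ⊆ ℝ^n carries the Euclidean topology). -/
import Mathlib


open Finset Matrix

/-- Tropical (max-plus) matrix multiplication on n × n real matrices. -/
noncomputable def tmul {n : ℕ} [NeZero n] (A B : Matrix (Fin n) (Fin n) ℝ) :
    Matrix (Fin n) (Fin n) ℝ :=
  fun i j => univ.sup' univ_nonempty (fun k => A i k + B k j)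

/-- Tropical action of a matrix on a vector: (A ⊗ x)_i = max_k (A_{i,k} + x_k). -/
noncomputable def tvec {n : ℕ} [NeZero n] (A : Matrix (Fin n) (Fin n) ℝ) (x : Fin n → ℝ) :
    Fin n → ℝ :=
  fun i => univ.sup' univ_nonempty (fun k => A i k + x k)

/-- Tropical column space: all tropical linear combinations of columns of A. -/
noncomputable def colSpace {n : ℕ} [NeZero n] (A : Matrix (Fin n) (Fin n) ℝ) :
    Set (Fin n → ℝ) :=
  Set.range (tvec A)

/-- The H-class of E: matrices with the same row space and column space as E. -/
noncomputable def Hclass {n : ℕ} [NeZero n] (E : Matrix (Fin n) (Fin n) ℝ) :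
    Set (Matrix (Fin n) (Fin n) ℝ) :=
  {A | colSpace A = colSpace E ∧ colSpace Aᵀ = colSpace Eᵀ}

namespace TropProof

variable {n : ℕ} [NeZero n]

lemma le_tvec (A : Matrix (Fin n) (Fin n) ℝ) (x : Fin n → ℝ) (i k : Fin n) :
    A i k + x k ≤ tvec A x i :=
  Finset.le_sup' (fun k => A i k + x k) (mem_univ k)

lemma tvec_le {A : Matrix (Fin n) (Fin n) ℝ} {x : Fin n → ℝ} {i : Fin n} {c : ℝ}
    (h : ∀ k, A i k + x k ≤ c) : tvec A x i ≤ c :=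
  Finset.sup'_le _ _ fun k _ => h k

lemma exists_tvec (A : Matrix (Fin n) (Fin n) ℝ) (x : Fin n → ℝ) (i : Fin n) :
    ∃ k, tvec A x i = A i k + x k := by
  obtain ⟨k, -, hk⟩ := Finset.exists_mem_eq_sup' univ_nonempty (fun k => A i k + x k)
  exact ⟨k, hk⟩

lemma le_tmul (A B : Matrix (Fin n) (Fin n) ℝ) (i j k : Fin n) :
    A i k + B k j ≤ tmul A B i j :=
  Finset.le_sup' (fun k => A i k + B k j) (mem_univ k)

lemma tmul_le {A B : Matrix (Fin n) (Fin n) ℝ} {i j : Fin n} {c : ℝ}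
    (h : ∀ k, A i k + B k j ≤ c) : tmul A B i j ≤ c :=
  Finset.sup'_le _ _ fun k _ => h k

lemma exists_tmul (A B : Matrix (Fin n) (Fin n) ℝ) (i j : Fin n) :
    ∃ k, tmul A B i j = A i k + B k j := by
  obtain ⟨k, -, hk⟩ := Finset.exists_mem_eq_sup' univ_nonempty (fun k => A i k + B k j)
  exact ⟨k, hk⟩

/-- Membership in C(E) as a system of inequalities. -/
def inC (E : Matrix (Fin n) (Fin n) ℝ) (x : Fin n → ℝ) : Prop := ∀ a b, E a b + x b ≤ x a

lemma tvec_eq_self_of_inC {E : Matrix (Fin n) (Fin n) ℝ} {x : Fin n → ℝ}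
    (hdiag : ∀ i, E i i = 0) (h : inC E x) : tvec E x = x := by
  funext a
  refine le_antisymm (tvec_le fun k => h a k) ?_
  have := le_tvec E x a a
  rwa [hdiag, zero_add] at this

lemma inC_of_tvec_eq_self {E : Matrix (Fin n) (Fin n) ℝ} {x : Fin n → ℝ}
    (h : tvec E x = x) : inC E x := by
  intro a b
  calc E a b + x b ≤ tvec E x a := le_tvec E x a b
  _ = x a := congrFun h a

lemma inC_tvec {E : Matrix (Fin n) (Fin n) ℝ} (hE : tmul E E = E) (y : Fin n → ℝ) :
    inC E (tvec E y) := by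
  intro a b
  obtain ⟨k, hk⟩ := exists_tvec E y b
  have h1 : E a b + E b k ≤ E a k := by
    have := le_tmul E E a k b
    rwa [hE] at this
  calc E a b + tvec E y b = (E a b + E b k) + y k := by rw [hk]; ring
  _ ≤ E a k + y k := by linarith
  _ ≤ tvec E y a := le_tvec E y a k

/-- Columns of any A with the same column space as E lie in C(E). -/
lemma col_inC {E A : Matrix (Fin n) (Fin n) ℝ} (hE : tmul E E = E)
    (hcs : colSpace A = colSpace E) (j : Fin n) :
    inC E (fun q => A q j) := by
  set S : ℝ := univ.sup' univ_nonempty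
      (fun a => univ.sup' univ_nonempty (fun k => A a k - A a j)) with hS
  set M : ℝ := 1 + S with hM
  set x : Fin n → ℝ := fun k => if k = j then 0 else -M with hx
  have hbound : ∀ a k, A a k - A a j ≤ S := by
    intro a k
    have h1 : A a k - A a j ≤ univ.sup' univ_nonempty (fun k => A a k - A a j) :=
      Finset.le_sup' (fun k => A a k - A a j) (mem_univ k)
    have h2 : univ.sup' univ_nonempty (fun k => A a k - A a j) ≤ S :=
      Finset.le_sup' (fun a => univ.sup' univ_nonempty (fun k => A a k - A a j)) (mem_univ a)
    linarith
  have heq : tvec A x = fun q => A q j := by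
    funext a
    refine le_antisymm (tvec_le fun k => ?_) ?_
    · by_cases hk : k = j
      · subst hk; simp [hx]
      · have hb := hbound a k
        simp only [hx, if_neg hk, hM]
        linarith
    · have := le_tvec A x a j
      simpa [hx] using this
  have hmem : tvec A x ∈ colSpace E := by
    rw [← hcs]; exact ⟨x, rfl⟩
  obtain ⟨w, hw⟩ := hmem
  have hC := inC_tvec hE w
  rw [hw, heq] at hC
  exact hC

lemma tmul_transpose_self {E : Matrix (Fin n) (Fin n) ℝ} (hE : tmul E E = E) :
    tmul Eᵀ Eᵀ = Eᵀ := by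
  funext i j
  show univ.sup' univ_nonempty (fun k => Eᵀ i k + Eᵀ k j) = Eᵀ i j
  have h : (fun k => Eᵀ i k + Eᵀ k j) = fun k => E j k + E k i := by
    funext k; simp [Matrix.transpose_apply]; ring
  rw [h]
  exact congrFun (congrFun hE j) i

/-- Rows of any A with the same row space as E satisfy the C(Eᵀ) inequalities. -/
lemma row_fact {E A : Matrix (Fin n) (Fin n) ℝ} (hE : tmul E E = E)
    (hrs : colSpace Aᵀ = colSpace Eᵀ) (i a b : Fin n) :
    E b a + A i b ≤ A i a := by
  have h := col_inC (tmul_transpose_self hE) hrs i a b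
  simpa [Matrix.transpose_apply] using h

lemma tvec_tmul (A B : Matrix (Fin n) (Fin n) ℝ) (x : Fin n → ℝ) :
    tvec (tmul A B) x = tvec A (tvec B x) := by
  funext i
  refine le_antisymm (tvec_le fun k => ?_) (tvec_le fun l => ?_)
  · obtain ⟨l, hl⟩ := exists_tmul A B i k
    calc tmul A B i k + x k = A i l + (B l k + x k) := by rw [hl]; ring
    _ ≤ A i l + tvec B x l := by have := le_tvec B x l k; linarith
    _ ≤ tvec A (tvec B x) i := le_tvec A _ i l
  · obtain ⟨k, hk⟩ := exists_tvec B x l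
    calc A i l + tvec B x l = (A i l + B l k) + x k := by rw [hk]; ring
    _ ≤ tmul A B i k + x k := by have := le_tmul A B i k l; linarith
    _ ≤ tvec (tmul A B) x i := le_tvec (tmul A B) x i k

lemma tmul_assoc (A B C : Matrix (Fin n) (Fin n) ℝ) :
    tmul (tmul A B) C = tmul A (tmul B C) := by
  funext i j
  have h1 : tmul (tmul A B) C i j = tvec (tmul A B) (fun k => C k j) i := rfl
  have h2 : tmul A (tmul B C) i j = tvec A (tvec B (fun k => C k j)) i := rfl
  rw [h1, h2, tvec_tmul]

lemma exists_left_factor {E A : Matrix (Fin n) (Fin n) ℝ} (hE : tmul E E = E)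
    (hrs : colSpace Aᵀ = colSpace Eᵀ) : ∃ B, tmul B A = E := by
  have hrow : ∀ i, ∃ b, tvec Aᵀ b = fun j => E i j := by
    intro i
    have hmem : (fun j => E i j) ∈ colSpace Eᵀ := by
      refine ⟨fun k => E i k, ?_⟩
      funext j
      show univ.sup' univ_nonempty (fun k => Eᵀ j k + E i k) = E i j
      have h : (fun k => Eᵀ j k + E i k) = fun k => E i k + E k j := by
        funext k; simp [Matrix.transpose_apply]; ring
      rw [h]
      exact congrFun (congrFun hE i) j
    rw [← hrs] at hmem
    exact hmem
  choose B hB using hrow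
  refine ⟨fun i k => B i k, ?_⟩
  funext i j
  have h : tmul (fun i k => B i k) A i j = tvec Aᵀ (B i) j := by
    show univ.sup' univ_nonempty (fun k => B i k + A k j)
        = univ.sup' univ_nonempty (fun k => Aᵀ j k + B i k)
    congr 1; funext k; simp [Matrix.transpose_apply]; ring
  rw [h]
  exact congrFun (hB i) j

lemma exists_right_factor {E A : Matrix (Fin n) (Fin n) ℝ} (hE : tmul E E = E)
    (hcs : colSpace A = colSpace E) : ∃ C, tmul A C = E := by
  have hcol : ∀ j, ∃ c, tvec A c = fun q => E q j := by
    intro j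
    have hmem : (fun q => E q j) ∈ colSpace E := by
      refine ⟨fun k => E k j, ?_⟩
      funext q
      exact congrFun (congrFun hE q) j
    rw [← hcs] at hmem
    exact hmem
  choose c hc using hcol
  refine ⟨fun k j => c j k, ?_⟩
  funext i j
  have h : tmul A (fun k j => c j k) i j = tvec A (c j) i := rfl
  rw [h]
  exact congrFun (hc j) i

lemma tmul_AE {E A : Matrix (Fin n) (Fin n) ℝ} (hE : tmul E E = E)
    (hdiag : ∀ i, E i i = 0) (hrs : colSpace Aᵀ = colSpace Eᵀ) :
    tmul A E = A := by
  funext i j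
  refine le_antisymm (tmul_le fun k => ?_) ?_
  · have := row_fact hE hrs i j k; linarith
  · have := le_tmul A E i j j
    rwa [hdiag j, add_zero] at this

lemma tmul_EA {E A : Matrix (Fin n) (Fin n) ℝ} (hE : tmul E E = E)
    (hdiag : ∀ i, E i i = 0) (hcs : colSpace A = colSpace E) :
    tmul E A = A := by
  funext i j
  refine le_antisymm (tmul_le fun k => col_inC hE hcs j i k) ?_
  · have := le_tmul E A i j i
    rwa [hdiag i, zero_add] at this

/-- Tightness relation: if X p m + Y m p = 0 (with X⊗Y = E, E⊗X = X), then column m of X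
is column p of E shifted. -/
lemma colrel {E X Y : Matrix (Fin n) (Fin n) ℝ} (hXY : tmul X Y = E) (hEX : tmul E X = X)
    {p m : Fin n} (hm : X p m + Y m p = 0) (q : Fin n) :
    X q m = E q p + X p m := by
  refine le_antisymm ?_ ?_
  · have h1 : X q m + Y m p ≤ E q p := by
      have := le_tmul X Y q p m
      rwa [hXY] at this
    linarith
  · have := le_tmul E X q m p
    rwa [hEX] at this

lemma matching_exists {E X Y : Matrix (Fin n) (Fin n) ℝ} (hXY : tmul X Y = E)
    (hdiag : ∀ i, E i i = 0) (p : Fin n) : ∃ m, X p m + Y m p = 0 := by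
  obtain ⟨m, hm⟩ := exists_tmul X Y p p
  refine ⟨m, ?_⟩
  rw [hXY, hdiag p] at hm
  exact hm.symm

lemma matching_unique {E X Y : Matrix (Fin n) (Fin n) ℝ}
    (hcols : ∀ i j (α : ℝ), i ≠ j → (fun k => E k i) ≠ (fun k => α + E k j))
    (hYX : tmul Y X = E) (hEY : tmul E Y = Y)
    {p m₁ m₂ : Fin n} (h1 : X p m₁ + Y m₁ p = 0) (h2 : X p m₂ + Y m₂ p = 0) :
    m₁ = m₂ := by
  by_contra hne
  have e1 : ∀ q, Y q p = E q m₁ + Y m₁ p :=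
    colrel hYX hEY (by linarith) 
  have e2 : ∀ q, Y q p = E q m₂ + Y m₂ p :=
    colrel hYX hEY (by linarith)
  exact hcols m₁ m₂ (Y m₂ p - Y m₁ p) hne (by
    funext q
    have ha := e1 q
    have hb := e2 q
    show E q m₁ = Y m₂ p - Y m₁ p + E q m₂
    linarith)

end TropProof

open TropProof in
theorem Hclass_action_boundary {n : ℕ} [NeZero n]
    (E : Matrix (Fin n) (Fin n) ℝ) (hE : tmul E E = E)
    (hdiag : ∀ i, E i i = 0)
    (hcols : ∀ i j (α : ℝ), i ≠ j → (fun k => E k i) ≠ (fun k => α + E k j))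
    (C : Set (Fin n → ℝ)) (hC : C = {x | tvec E x = x})
    (hext : ∀ x ∉ C, tvec E x ∈ frontier C)
    (A : Matrix (Fin n) (Fin n) ℝ) (hA : A ∈ Hclass E) :
    (∀ x ∉ C, tvec A x ∈ frontier C) ∧
    (∀ x ∈ interior C, tvec A x ∈ interior C) ∧
    (∀ x ∈ C, x ∈ frontier C → tvec A x ∈ frontier C) := by
  obtain ⟨hcs, hrs⟩ := hA
  -- membership in C
  have hmemC : ∀ x : Fin n → ℝ, x ∈ C ↔ inC E x := by
    intro x
    rw [hC]
    exact ⟨fun h => inC_of_tvec_eq_self h, fun h => tvec_eq_self_of_inC hdiag h⟩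
  -- build the group inverse A'
  obtain ⟨B, hB⟩ := exists_left_factor hE hrs
  obtain ⟨C', hC'⟩ := exists_right_factor hE hcs
  have hAE : tmul A E = A := tmul_AE hE hdiag hrs
  have hEA : tmul E A = A := tmul_EA hE hdiag hcs
  set A' : Matrix (Fin n) (Fin n) ℝ := tmul B E with hA'def
  have hBE_EC : tmul B E = tmul E C' := by
    calc tmul B E = tmul B (tmul A C') := by rw [hC']
    _ = tmul (tmul B A) C' := (tmul_assoc B A C').symm
    _ = tmul E C' := by rw [hB]
  have hA'A : tmul A' A = E := by
    calc tmul (tmul B E) A = tmul B (tmul E A) := tmul_assoc B E A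
    _ = tmul B A := by rw [hEA]
    _ = E := hB
  have hAA' : tmul A A' = E := by
    rw [hA'def, hBE_EC]
    calc tmul A (tmul E C') = tmul (tmul A E) C' := (tmul_assoc A E C').symm
    _ = tmul A C' := by rw [hAE]
    _ = E := hC'
  have hEA' : tmul E A' = A' := by
    rw [hA'def, hBE_EC]
    calc tmul E (tmul E C') = tmul (tmul E E) C' := (tmul_assoc E E C').symm
    _ = tmul E C' := by rw [hE]
  have hA'E : tmul A' E = A' := by
    rw [hA'def]
    calc tmul (tmul B E) E = tmul B (tmul E E) := tmul_assoc B E E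
    _ = tmul B E := by rw [hE]
  -- the matching permutation
  choose σ hσ using fun p => matching_exists hAA' hdiag p
  choose τ hτ using fun m => matching_exists hA'A hdiag m
  -- hσ p : A p (σ p) + A' (σ p) p = 0
  -- hτ m : A' m (τ m) + A (τ m) m = 0
  have hτσ : ∀ p, τ (σ p) = p := by
    intro p
    exact matching_unique hcols hAA' hEA (hτ (σ p)) (by have := hσ p; linarith)
  have hστ : ∀ m, σ (τ m) = m := by
    intro m
    exact matching_unique hcols hA'A hEA' (hσ (τ m)) (by have := hτ m; linarith)
  -- key shift identity
  have hkey_ge : ∀ p q, E p q + A q (σ q) - A p (σ p) ≤ E (σ p) (σ q) := by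
    intro p q
    have hc : A' (σ p) q = E (σ p) (σ q) + A' (σ q) q :=
      colrel hA'A hEA' (by have := hσ q; linarith) (σ p)
    have h2 : A' (σ p) p + E p q ≤ A' (σ p) q := by
      have := le_tmul A' E (σ p) q p
      rwa [hA'E] at this
    have h3 := hσ p
    have h4 := hσ q
    linarith
  have hkey_ge' : ∀ a b, E a b + A' b (τ b) - A' a (τ a) ≤ E (τ a) (τ b) := by
    intro a b
    have hc : A (τ a) b = E (τ a) (τ b) + A (τ b) b :=
      colrel hAA' hEA (by have := hτ b; linarith) (τ a)
    have h2 : A (τ a) a + E a b ≤ A (τ a) b := by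
      have := le_tmul A E (τ a) b a
      rwa [hAE] at this
    have h3 := hτ a
    have h4 := hτ b
    linarith
  have hkey : ∀ p q, E (σ p) (σ q) = E p q + A q (σ q) - A p (σ p) := by
    intro p q
    refine le_antisymm ?_ (by have := hkey_ge p q; linarith)
    have h := hkey_ge' (σ p) (σ q)
    rw [hτσ p, hτσ q] at h
    have h3 := hσ p
    have h4 := hσ q
    have h5 := hτ (σ p)
    have h6 := hτ (σ q)
    rw [hτσ p] at h5
    rw [hτσ q] at h6
    linarith
  -- columns of A are shifted columns of E
  have hcolA : ∀ q p, A q (σ p) = E q p + A p (σ p) := by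
    intro q p
    exact colrel hAA' hEA (hσ p) q
  -- the homeomorphism T
  set Tf : (Fin n → ℝ) → (Fin n → ℝ) := fun x p => x (σ p) + A p (σ p) with hTf
  set Tg : (Fin n → ℝ) → (Fin n → ℝ) := fun y a => y (τ a) - A (τ a) (σ (τ a)) with hTg
  have hleft : ∀ x, Tg (Tf x) = x := by
    intro x
    funext a
    show Tf x (τ a) - A (τ a) (σ (τ a)) = x a
    show x (σ (τ a)) + A (τ a) (σ (τ a)) - A (τ a) (σ (τ a)) = x a
    rw [hστ a]; ring
  have hright : ∀ y, Tf (Tg y) = y := by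
    intro y
    funext p
    show Tg y (σ p) + A p (σ p) = y p
    show y (τ (σ p)) - A (τ (σ p)) (σ (τ (σ p))) + A p (σ p) = y p
    rw [hτσ p]; ring
  have hTcont : Continuous Tf := by
    apply continuous_pi
    intro p
    exact (continuous_apply (σ p)).add continuous_const
  have hTgcont : Continuous Tg := by
    apply continuous_pi
    intro a
    exact (continuous_apply (τ a)).sub continuous_const
  let Th : (Fin n → ℝ) ≃ₜ (Fin n → ℝ) :=
    { toFun := Tf
      invFun := Tg
      left_inv := hleft
      right_inv := hright
      continuous_toFun := hTcont
      continuous_invFun := hTgcont }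
  -- tvec A = tvec E ∘ Tf
  have htA : ∀ x, tvec A x = tvec E (Tf x) := by
    intro x
    funext i
    refine le_antisymm (tvec_le fun j => ?_) (tvec_le fun p => ?_)
    · -- A i j + x j ≤ tvec E (Tf x) i
      have h1 := hcolA i (τ j)
      rw [hστ j] at h1
      have h2 : Tf x (τ j) = x (σ (τ j)) + A (τ j) (σ (τ j)) := rfl
      rw [hστ j] at h2
      have h3 := le_tvec E (Tf x) i (τ j)
      rw [h2] at h3
      linarith
    · -- E i p + Tf x p ≤ tvec A x i
      have h1 : Tf x p = x (σ p) + A p (σ p) := rfl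
      have h2 := hcolA i p
      have h3 := le_tvec A x i (σ p)
      linarith
  -- Tf and Tg preserve C
  have hTf_inC : ∀ x, inC E x → inC E (Tf x) := by
    intro x hx a b
    have h1 : E (σ a) (σ b) + x (σ b) ≤ x (σ a) := hx (σ a) (σ b)
    have h2 := hkey a b
    show E a b + (x (σ b) + A b (σ b)) ≤ x (σ a) + A a (σ a)
    linarith
  have hTg_inC : ∀ y, inC E y → inC E (Tg y) := by
    intro y hy a b
    have h1 : E (τ a) (τ b) + y (τ b) ≤ y (τ a) := hy (τ a) (τ b)
    have h2 := hkey (τ a) (τ b)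
    rw [hστ a, hστ b] at h2
    show E a b + (y (τ b) - A (τ b) (σ (τ b))) ≤ y (τ a) - A (τ a) (σ (τ a))
    rw [hστ a, hστ b]
    linarith
  have hTC : Th '' C = C := by
    apply Set.eq_of_subset_of_subset
    · rintro y ⟨x, hx, rfl⟩
      rw [hmemC] at hx ⊢
      exact hTf_inC x hx
    · intro y hy
      refine ⟨Tg y, ?_, hright y⟩
      rw [hmemC] at hy ⊢
      exact hTg_inC y hy
  have hid : ∀ y ∈ C, tvec E y = y := by
    intro y hy
    rw [hC] at hy
    exact hy
  refine ⟨?_, ?_, ?_⟩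
  · -- outside C
    intro x hx
    have hTx : Tf x ∉ C := by
      intro h
      apply hx
      have := hTg_inC (Tf x) ((hmemC _).mp h)
      rw [hleft x] at this
      exact (hmemC x).mpr this
    rw [htA x]
    exact hext (Tf x) hTx
  · -- interior
    intro x hx
    have h1 : Tf x ∈ interior C := by
      have : Tf x ∈ Th '' interior C := ⟨x, hx, rfl⟩
      rwa [Th.image_interior, hTC] at this
    rw [htA x, hid (Tf x) (interior_subset h1)]
    exact h1
  · -- frontier
    intro x hxC hx
    have h1 : Tf x ∈ frontier C := by
      have : Tf x ∈ Th '' frontier C := ⟨x, hx, rfl⟩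
      rwa [Th.image_frontier, hTC] at this
    have h2 : Tf x ∈ C := (hmemC _).mpr (hTf_inC x ((hmemC x).mp hxC))
    rw [htA x, hid (Tf x) h2]
    exact h1
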